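/- If S ⊆ Mⁿ is definable and invariant under coordinatewise translation by Q (i.e., x + q ∈ S for every x ∈ S and q ∈ Qⁿ), then S is a finite Boolean combination of sets of the form {x ∈ Mⁿ : α₁x₁ + ⋯ + αₙxₙ + b ∈ Q} with α₁,…,αₙ ∈ F and b ∈ M. (Equivalently: the quotient sort M/Q, with the structure induced from the pair (M,Q), is a pure F-vector space.) -/

import Mathlib

open FirstOrder Language Set

/-- Functions of the language of ordered `F`-vector spaces with a predicate:
`+`, `-`, `0`, `1`, and scalar multiplication by each element of `F`. -/
inductive LPFunc (F : Type) : ℕ → Type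
  | add : LPFunc F 2
  | neg : LPFunc F 1
  | zero : LPFunc F 0
  | one : LPFunc F 0
  | smul : F → LPFunc F 1

/-- Relations: the order `<` and the unary predicate `Q`. -/
inductive LPRel : ℕ → Type
  | lt : LPRel 2
  | q : LPRel 1

/-- The language `L_P`. -/
def LP (F : Type) : Language := ⟨LPFunc F, LPRel⟩

variable (F M : Type) [Field F] [LinearOrder F] [IsStrictOrderedRing F] [AddCommGroup M] [LinearOrder M] [IsOrderedAddMonoid M] [Module F M]

/-- The natural `L_P`-structure on an ordered `F`-vector space `M` with
distinguished element `one` and predicate `Q`. -/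
def LPStruc (one : M) (Q : Set M) : (LP F).Structure M where
  funMap := fun {n} f x =>
    match n, f with
    | _, LPFunc.add => x 0 + x 1
    | _, LPFunc.neg => -(x 0)
    | _, LPFunc.zero => 0
    | _, LPFunc.one => one
    | _, LPFunc.smul c => c • x 0
  RelMap := fun {n} r x =>
    match n, r with
    | _, LPRel.lt => x 0 < x 1
    | _, LPRel.q => x 0 ∈ Q

/-- A subset of `N^n` is definable (with parameters from `N`). -/
def DefinableIn (L : Language) (N : Type) [L.Structure N] {n : ℕ} (S : Set (Fin n → N)) : Prop :=
  Set.Definable (Set.univ : Set N) L S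

/-- A subset of `N` is definable (with parameters from `N`). -/
def Definable1In (L : Language) (N : Type) [L.Structure N] (S : Set N) : Prop :=
  DefinableIn L N {x : Fin 1 → N | x 0 ∈ S}

/-- A function `N^n → N` is definable if its graph is definable. -/
def DefinableFunIn (L : Language) (N : Type) [L.Structure N] {n : ℕ}
    (f : (Fin n → N) → N) : Prop :=
  DefinableIn L N {x : Fin (n + 1) → N | x (Fin.last n) = f (fun i => x (Fin.castSucc i))}

/-- `S ⊆ N` is `P`-small: covered by the image of `Pⁿ` under a definable function. -/
def SmallIn (L : Language) (N : Type) [L.Structure N] (P : Set N) (S : Set N) : Prop :=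
  ∃ (n : ℕ) (f : (Fin n → N) → N), DefinableFunIn L N f ∧
    S ⊆ f '' {x : Fin n → N | ∀ i, x i ∈ P}

/-- Definability in the pair of ordered vector spaces. -/
def POVSDefinable (one : M) (Q : Set M) {n : ℕ} (S : Set (Fin n → M)) : Prop :=
  letI := LPStruc F M one Q
  DefinableIn (LP F) M S

/-- Definability of a unary set in the pair of ordered vector spaces. -/
def POVSDefinable1 (one : M) (Q : Set M) (S : Set M) : Prop :=
  letI := LPStruc F M one Q
  Definable1In (LP F) M S

/-- Smallness in the pair of ordered vector spaces. -/
def POVSSmall (one : M) (Q : Set M) (S : Set M) : Prop :=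
  letI := LPStruc F M one Q
  SmallIn (LP F) M Q S

/-- The embedding of `M` into `M ∪ {-∞, +∞}`. -/
def toExt (x : M) : WithBot (WithTop M) := ((x : WithTop M) : WithBot (WithTop M))

/-- The open interval `(a,b)` with endpoints from `M ∪ {-∞, +∞}`, as a subset of `M`. -/
def extIoo (a b : WithBot (WithTop M)) : Set M := {x : M | a < toExt M x ∧ toExt M x < b}

/-- The union of the cosets `c + Q` for `c ∈ C`. -/
def cosetUnion (Q : Set M) (C : Finset M) : Set M := ⋃ c ∈ C, {x : M | x - c ∈ Q}

/-- A near-interval: a nonempty set of the form `(a,b) ∩ C` or `(a,b) \ C`, where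
`a < b` in `M ∪ {-∞,+∞}` and `C` is a finite union of cosets of `Q`. -/
def NearInterval (Q : Set M) (S : Set M) : Prop :=
  S.Nonempty ∧ ∃ (a b : WithBot (WithTop M)) (C : Finset M), a < b ∧
    (S = extIoo M a b ∩ cosetUnion M Q C ∨ S = extIoo M a b \ cosetUnion M Q C)
/-- Finite Boolean combinations of sets from a family `B`. -/
inductive BoolComb {α : Type} (B : Set (Set α)) : Set α → Prop
  | basic {s : Set α} : s ∈ B → BoolComb B s
  | univ : BoolComb B Set.univ
  | compl {s : Set α} : BoolComb B s → BoolComb B sᶜ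
  | inter {s t : Set α} : BoolComb B s → BoolComb B t → BoolComb B (s ∩ t)

/-!
The pair `(M, Q)` eliminates quantifiers down to the atoms `0 < f x` and `f x ∈ Q`, `f` affine.
To eliminate `∃ y`, each atom mentioning `y` is solved for `y`, giving `y < t`, `y ≤ t`, `t < y`,
`t ≤ y`, `y - t ∈ Q` or `y - t ∉ Q` with `t` affine in the other variables. Such a system has a
solution iff one of its non-strict bounds is a solution or every lower bound is below every upper
bound and the coset conditions are consistent: every coset of the dense subspace `Q` meets every
interval, and a proper subspace of a vector space over an infinite field has infinitely many
cosets.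

If moreover `S` is invariant under `Qⁿ`, pick a small cube on which every order atom of `S` is
constant. A translate by `Qⁿ` brings any point into that cube without changing the value of any
`Q`-atom, so membership in `S` depends only on the `Q`-atoms.
-/

namespace BoolComb

variable {α : Type} {B : Set (Set α)} {s t : Set α}

theorem empty : BoolComb B ∅ := by
  simpa using (univ : BoolComb B Set.univ).compl

theorem union (hs : BoolComb B s) (ht : BoolComb B t) : BoolComb B (s ∪ t) := by
  simpa [Set.compl_inter] using (hs.compl.inter ht.compl).compl

theorem setOf_const (p : Prop) : BoolComb B {_x | p} := by
  by_cases hp : p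
  · simpa [hp] using (univ : BoolComb B Set.univ)
  · simpa [hp] using (empty : BoolComb B ∅)

theorem setOf_forall_mem {β : Type*} {p : β → α → Prop} (l : List β)
    (h : ∀ b ∈ l, BoolComb B {x | p b x}) : BoolComb B {x | ∀ b ∈ l, p b x} := by
  induction l with
  | nil => simpa using (univ : BoolComb B Set.univ)
  | cons b l ih =>
    simp only [List.mem_cons, forall_eq_or_imp, Set.ofPred_and]
    exact (h b List.mem_cons_self).inter (ih fun b hb => h b (List.mem_cons_of_mem _ hb))

theorem setOf_exists_mem {β : Type*} {p : β → α → Prop} (l : List β)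
    (h : ∀ b ∈ l, BoolComb B {x | p b x}) : BoolComb B {x | ∃ b ∈ l, p b x} := by
  have := (setOf_forall_mem (p := fun b x => ¬ p b x) l fun b hb => (h b hb).compl).compl
  simpa [Set.compl_ofPred] using this

def IsDeterminedBy (A : List (Set α)) (s : Set α) : Prop :=
  ∀ x y, (∀ a ∈ A, x ∈ a ↔ y ∈ a) → x ∈ s → y ∈ s

theorem exists_isDeterminedBy (h : BoolComb B s) :
    ∃ A : List (Set α), (∀ a ∈ A, a ∈ B) ∧ IsDeterminedBy A s := by
  induction h with
  | @basic s hs => exact ⟨[s], by simpa using hs, fun x y hxy => (hxy s (by simp)).1⟩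
  | univ => exact ⟨[], by simp, fun _ _ _ _ => trivial⟩
  | compl _ ih =>
    obtain ⟨A, hAB, hA⟩ := ih
    exact ⟨A, hAB, fun x y hxy hx hy => hx (hA y x (fun a ha => (hxy a ha).symm) hy)⟩
  | inter _ _ ih₁ ih₂ =>
    obtain ⟨A₁, hA₁B, hA₁⟩ := ih₁
    obtain ⟨A₂, hA₂B, hA₂⟩ := ih₂
    refine ⟨A₁ ++ A₂, by simpa [or_imp, forall_and] using ⟨hA₁B, hA₂B⟩, fun x y hxy hx => ?_⟩
    simp only [List.mem_append, or_imp, forall_and] at hxy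
    exact ⟨hA₁ x y hxy.1 hx.1, hA₂ x y hxy.2 hx.2⟩

theorem IsDeterminedBy.eq_empty_or_eq_univ (h : IsDeterminedBy [] s) :
    s = ∅ ∨ s = Set.univ := by
  rcases s.eq_empty_or_nonempty with hs | ⟨x, hx⟩
  · exact Or.inl hs
  · exact Or.inr (Set.eq_univ_of_forall fun y => h x y (by simp) hx)

theorem IsDeterminedBy.cons {a : Set α} {A : List (Set α)} (h : IsDeterminedBy (a :: A) s) :
    ∃ s₁ s₂, IsDeterminedBy A s₁ ∧ IsDeterminedBy A s₂ ∧ s = a ∩ s₁ ∪ aᶜ ∩ s₂ := by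
  let part (c : Set α) : Set α := {y | ∃ x ∈ s ∩ c, ∀ b ∈ A, x ∈ b ↔ y ∈ b}
  have hpart (c : Set α) : IsDeterminedBy A (part c) := by
    rintro y z hyz ⟨x, hx, hxy⟩
    exact ⟨x, hx, fun b hb => (hxy b hb).trans (hyz b hb)⟩
  have hsub {c : Set α} (hca : ∀ x y, x ∈ c → y ∈ c → (x ∈ a ↔ y ∈ a)) :
      c ∩ part c ⊆ s := by
    rintro y ⟨hy, x, ⟨hxs, hxc⟩, hxy⟩
    exact h x y (by simpa using ⟨hca x y hxc hy, hxy⟩) hxs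
  refine ⟨part a, part aᶜ, hpart a, hpart aᶜ, Set.Subset.antisymm ?_ ?_⟩
  · intro x hx
    by_cases hxa : x ∈ a
    · exact Or.inl ⟨hxa, x, ⟨hx, hxa⟩, fun _ _ => Iff.rfl⟩
    · exact Or.inr ⟨hxa, x, ⟨hx, hxa⟩, fun _ _ => Iff.rfl⟩
  · exact Set.union_subset (hsub fun _ _ hx hy => iff_of_true hx hy)
      (hsub fun _ _ hx hy => iff_of_false hx hy)

theorem of_isDeterminedBy {A : List (Set α)} (hA : ∀ a ∈ A, BoolComb B a)
    (h : IsDeterminedBy A s) : BoolComb B s := by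
  induction A generalizing s with
  | nil =>
    rcases h.eq_empty_or_eq_univ with rfl | rfl
    · exact empty
    · exact univ
  | cons a A ih =>
    obtain ⟨s₁, s₂, h₁, h₂, rfl⟩ := h.cons
    have ha := hA a List.mem_cons_self
    have hA' := fun b hb => hA b (List.mem_cons_of_mem a hb)
    exact (ha.inter (ih hA' h₁)).union (ha.compl.inter (ih hA' h₂))

end BoolComb

section AffineForm

variable {F M : Type} [Ring F] [AddCommGroup M] [Module F M] {ι : Type} [Fintype ι]

variable (F) in
def IsAffineForm (f : (ι → M) → M) : Prop :=
  ∃ (c : ι → F) (b : M), ∀ x, f x = ∑ i, c i • x i + b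

variable {f g : (ι → M) → M}

theorem isAffineForm_const (b : M) : IsAffineForm F fun _ : ι → M => b :=
  ⟨0, b, by simp⟩

theorem isAffineForm_apply [DecidableEq ι] (i : ι) : IsAffineForm F fun x : ι → M => x i :=
  ⟨Pi.single i 1, 0, fun x => by simp [Pi.single_apply, ite_smul]⟩

theorem IsAffineForm.add (hf : IsAffineForm F f) (hg : IsAffineForm F g) :
    IsAffineForm F (f + g) := by
  obtain ⟨c, b, hf⟩ := hf
  obtain ⟨c', b', hg⟩ := hg
  exact ⟨c + c', b + b', fun x => by
    simp only [Pi.add_apply, hf, hg, add_smul, Finset.sum_add_distrib]; abel⟩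

theorem IsAffineForm.smul (a : F) (hf : IsAffineForm F f) : IsAffineForm F (a • f) := by
  obtain ⟨c, b, hf⟩ := hf
  exact ⟨a • c, a • b, fun x => by
    simp only [Pi.smul_apply, hf, smul_add, Finset.smul_sum, smul_eq_mul, mul_smul]⟩

theorem IsAffineForm.neg (hf : IsAffineForm F f) : IsAffineForm F (-f) := by
  simpa using hf.smul (-1)

theorem IsAffineForm.sub (hf : IsAffineForm F f) (hg : IsAffineForm F g) :
    IsAffineForm F (f - g) := by
  simpa [sub_eq_add_neg] using hf.add hg.neg

theorem IsAffineForm.exists_option_elim' {f : (Option ι → M) → M} (hf : IsAffineForm F f) :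
    ∃ (g : (ι → M) → M) (γ : F), IsAffineForm F g ∧ ∀ x y, f (Option.elim' y x) = g x + γ • y := by
  obtain ⟨c, b, hf⟩ := hf
  refine ⟨fun x => ∑ i, c (some i) • x i + b, c none, ⟨fun i => c (some i), b, fun _ => rfl⟩,
    fun x y => ?_⟩
  simp only [hf, Fintype.sum_option, Option.elim']
  abel

theorem IsAffineForm.add_mem_iff {Q : Submodule F M} (hf : IsAffineForm F f) (x : ι → M)
    {q : ι → M} (hq : ∀ i, q i ∈ Q) : f (x + q) ∈ Q ↔ f x ∈ Q := by
  obtain ⟨c, b, hf⟩ := hf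
  have : f (x + q) = f x + ∑ i, c i • q i := by
    simp only [hf, Pi.add_apply, smul_add, Finset.sum_add_distrib]; abel
  rw [this, Q.add_mem_iff_left (Q.sum_mem fun i _ => Q.smul_mem _ (hq i))]

end AffineForm

section QFDefinable

variable {F M : Type} [Ring F] [AddCommGroup M] [LinearOrder M] [Module F M]
  {ι : Type} [Fintype ι]

variable (F) in
def affineAtoms (Q : Submodule F M) : Set (Set (ι → M)) :=
  {a | ∃ f, IsAffineForm F f ∧ (a = {x | 0 < f x} ∨ a = {x | f x ∈ Q})}

variable (F) in
/-- Sets defined by quantifier-free formulas of `L_P` with parameters. -/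
abbrev QFDefinable (Q : Submodule F M) (S : Set (ι → M)) : Prop :=
  BoolComb (affineAtoms F Q) S

variable {Q : Submodule F M} {f g : (ι → M) → M}

theorem qfDefinable_setOf_pos (hf : IsAffineForm F f) : QFDefinable F Q {x | 0 < f x} :=
  .basic ⟨f, hf, Or.inl rfl⟩

theorem qfDefinable_setOf_mem (hf : IsAffineForm F f) : QFDefinable F Q {x | f x ∈ Q} :=
  .basic ⟨f, hf, Or.inr rfl⟩

variable [IsOrderedAddMonoid M]

theorem qfDefinable_setOf_lt (hf : IsAffineForm F f) (hg : IsAffineForm F g) :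
    QFDefinable F Q {x | f x < g x} := by
  simpa using qfDefinable_setOf_pos (Q := Q) (hg.sub hf)

theorem qfDefinable_setOf_le (hf : IsAffineForm F f) (hg : IsAffineForm F g) :
    QFDefinable F Q {x | f x ≤ g x} := by
  simpa [Set.compl_ofPred] using (qfDefinable_setOf_lt (Q := Q) hg hf).compl

theorem qfDefinable_setOf_eq (hf : IsAffineForm F f) (hg : IsAffineForm F g) :
    QFDefinable F Q {x | f x = g x} := by
  simpa [le_antisymm_iff, Set.ofPred_and] using
    (qfDefinable_setOf_le (Q := Q) hf hg).inter (qfDefinable_setOf_le hg hf)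

end QFDefinable

section Elimination

theorem exists_forall_le_forall_lt {α : Type*} [LinearOrder α] [NoMinOrder α] [Nonempty α]
    {L U : Set α} (hL : L.Finite) (hU : U.Finite) (h : ∀ l ∈ L, ∀ u ∈ U, l < u) :
    ∃ a, (∀ l ∈ L, l ≤ a) ∧ ∀ u ∈ U, a < u := by
  rcases L.eq_empty_or_nonempty with rfl | hne
  · obtain ⟨m, hm⟩ := hU.bddBelow
    obtain ⟨a, ha⟩ := exists_lt m
    exact ⟨a, by simp, fun u hu => ha.trans_le (hm hu)⟩
  · obtain ⟨a, haL, hmax⟩ := L.exists_max_image id hL hne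
    exact ⟨a, hmax, h a haL⟩

theorem exists_lt_forall_le_forall_le {α : Type*} [LinearOrder α] [NoMinOrder α]
    [NoMaxOrder α] [Nonempty α] {L U : Set α} (hL : L.Finite) (hU : U.Finite)
    (h : ∀ l ∈ L, ∀ u ∈ U, l < u) :
    ∃ a b, a < b ∧ (∀ l ∈ L, l ≤ a) ∧ ∀ u ∈ U, b ≤ u := by
  obtain ⟨a, hLa, haU⟩ := exists_forall_le_forall_lt hL hU h
  obtain ⟨b, hUb, hab⟩ := exists_forall_le_forall_lt (α := αᵒᵈ) hU (Set.finite_singleton a)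
    fun u hu _ ha => ha ▸ haU u hu
  exact ⟨a, b, hab a rfl, hLa, hUb⟩

variable {F M : Type} [DivisionRing F] [AddCommGroup M] [Module F M] {Q : Submodule F M}

theorem Submodule.nontrivial_of_coe_ne_univ (hQ : (Q : Set M) ≠ Set.univ) : Nontrivial M := by
  obtain ⟨v, hv⟩ := (Set.ne_univ_iff_exists_notMem _).1 hQ
  exact nontrivial_of_ne v 0 fun h => hv (h ▸ Q.zero_mem)

theorem Submodule.exists_forall_sub_notMem [Infinite F] (hQ : (Q : Set M) ≠ Set.univ)
    (D : Finset M) : ∃ t, ∀ d ∈ D, t - d ∉ Q := by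
  classical
  have : Nontrivial (M ⧸ Q) :=
    Submodule.Quotient.nontrivial_iff.mpr fun h => hQ (by simp [h])
  have : Infinite (M ⧸ Q) := Module.Free.infinite F (M ⧸ Q)
  obtain ⟨c, hc⟩ := Infinite.exists_notMem_finset (D.image (Submodule.Quotient.mk (p := Q)))
  obtain ⟨t, rfl⟩ := Submodule.Quotient.mk_surjective Q c
  exact ⟨t, fun d hd h => hc (Finset.mem_image.2 ⟨d, hd, ((Submodule.Quotient.eq Q).2 h).symm⟩)⟩

variable [LinearOrder M] [IsOrderedAddMonoid M]

theorem exists_sub_mem_Ioo (hQdense : ∀ a b : M, a < b → ∃ q ∈ Q, a < q ∧ q < b)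
    (t : M) {a b : M} (hab : a < b) : ∃ y, a < y ∧ y < b ∧ y - t ∈ Q := by
  obtain ⟨q, hq, haq, hqb⟩ := hQdense (a - t) (b - t) (sub_lt_sub_right hab t)
  exact ⟨q + t, sub_lt_iff_lt_add.1 haq, lt_sub_iff_add_lt.1 hqb, by simpa using hq⟩

end Elimination

section Comparison

/-- The ways in which a literal can constrain the eliminated variable `y` against a term `t`. -/
inductive Comparison
  | lt | le | gt | ge | mem | nmem

namespace Comparison

variable {F M : Type} [Ring F] [AddCommGroup M] [LinearOrder M] [Module F M]
  (Q : Submodule F M)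

def Holds : Comparison → M → M → Prop
  | lt, y, t => y < t
  | le, y, t => y ≤ t
  | gt, y, t => t < y
  | ge, y, t => t ≤ y
  | mem, y, t => y - t ∈ Q
  | nmem, y, t => y - t ∉ Q

/-- What two constraints on `y` require of their terms `a` and `b` when `y` is not one of the
terms of a non-strict bound. -/
def Compatible : Comparison → Comparison → M → M → Prop
  | gt, lt, a, b | gt, le, a, b | ge, lt, a, b | ge, le, a, b => a < b
  | mem, mem, a, b => a - b ∈ Q
  | mem, nmem, a, b => a - b ∉ Q
  | _, _, _, _ => True

end Comparison

open Comparison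

variable {F M : Type} [DivisionRing F] [Infinite F] [AddCommGroup M] [LinearOrder M]
  [IsOrderedAddMonoid M] [Module F M] {Q : Submodule F M}

theorem exists_forall_holds_of_compatible (hQproper : (Q : Set M) ≠ Set.univ)
    (hQdense : ∀ a b : M, a < b → ∃ q ∈ Q, a < q ∧ q < b) {C : List (Comparison × M)}
    (hcomp : ∀ c ∈ C, ∀ d ∈ C, Compatible Q c.1 d.1 c.2 d.2) :
    ∃ y, ∀ c ∈ C, c.1.Holds Q y c.2 := by
  have := Q.nontrivial_of_coe_ne_univ hQproper
  have hfin (P : Comparison → Prop) : {e | ∃ c ∈ C, P c.1 ∧ c.2 = e}.Finite :=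
    (C.map Prod.snd).finite_toSet.subset fun _ ⟨c, hc, _, he⟩ => he ▸ List.mem_map_of_mem hc
  obtain ⟨a, b, hab, hLa, hbU⟩ := exists_lt_forall_le_forall_le
      (hfin fun k => k = gt ∨ k = ge) (hfin fun k => k = lt ∨ k = le) <| by
    rintro _ ⟨⟨k, a⟩, hc, hk, rfl⟩ _ ⟨⟨k', b⟩, hd, hk', rfl⟩
    have := hcomp _ hc _ hd
    rcases hk with rfl | rfl <;> rcases hk' with rfl | rfl <;> exact this
  obtain ⟨t, ht⟩ : ∃ t, ∀ c ∈ C, (c.1 = mem → t - c.2 ∈ Q) ∧ (c.1 = nmem → t - c.2 ∉ Q) := by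
    by_cases hmem : ∃ c ∈ C, c.1 = mem
    · obtain ⟨⟨_, t⟩, hc₀, rfl⟩ := hmem
      exact ⟨t, fun _ hc => ⟨fun hk => by simpa [Compatible, hk] using hcomp _ hc₀ _ hc,
        fun hk => by simpa [Compatible, hk] using hcomp _ hc₀ _ hc⟩⟩
    · obtain ⟨t, ht⟩ := Q.exists_forall_sub_notMem hQproper (C.map Prod.snd).toFinset
      exact ⟨t, fun c hc => ⟨fun hk => absurd ⟨c, hc, hk⟩ hmem,
        fun _ => ht _ (by simpa using ⟨c.1, hc⟩)⟩⟩
  obtain ⟨y, hay, hyb, hyt⟩ := exists_sub_mem_Ioo hQdense t hab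
  refine ⟨y, fun ⟨k, e⟩ hc => ?_⟩
  cases k
  · exact hyb.trans_le (hbU e ⟨_, hc, Or.inl rfl, rfl⟩)
  · exact (hyb.trans_le (hbU e ⟨_, hc, Or.inr rfl, rfl⟩)).le
  · exact (hLa e ⟨_, hc, Or.inl rfl, rfl⟩).trans_lt hay
  · exact ((hLa e ⟨_, hc, Or.inr rfl, rfl⟩).trans_lt hay).le
  · simpa [Holds] using Q.add_mem hyt ((ht _ hc).1 rfl)
  · exact fun hye => (ht _ hc).2 rfl (by simpa using Q.sub_mem hye hyt)

theorem exists_forall_holds_iff (hQproper : (Q : Set M) ≠ Set.univ)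
    (hQdense : ∀ a b : M, a < b → ∃ q ∈ Q, a < q ∧ q < b) (C : List (Comparison × M)) :
    (∃ y, ∀ c ∈ C, c.1.Holds Q y c.2) ↔
      (∃ c ∈ C, (c.1 = le ∨ c.1 = ge) ∧ ∀ d ∈ C, d.1.Holds Q c.2 d.2) ∨
        ∀ c ∈ C, ∀ d ∈ C, Compatible Q c.1 d.1 c.2 d.2 := by
  refine ⟨fun ⟨y, hy⟩ => ?_, ?_⟩
  · by_cases hcl : ∃ c ∈ C, (c.1 = le ∨ c.1 = ge) ∧ c.2 = y
    · obtain ⟨c, hc, hk, rfl⟩ := hcl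
      exact Or.inl ⟨c, hc, hk, hy⟩
    push Not at hcl
    refine Or.inr fun ⟨k, a⟩ hc ⟨k', b⟩ hd => ?_
    have ha := hy _ hc
    have hb := hy _ hd
    have hay := hcl _ hc
    cases k <;> cases k' <;> simp only [Holds, Compatible] at ha hb ⊢
    all_goals first
      | trivial
      | exact ha.trans hb
      | exact ha.trans_le hb
      | exact ha.trans_lt hb
      | exact (lt_of_le_of_ne ha (hay (Or.inr rfl))).trans_le hb
      | simpa using Q.sub_mem hb ha
      | exact fun hab => hb (by simpa using Q.add_mem ha hab)
  · rintro (⟨c, -, -, hc⟩ | hcomp)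
    · exact ⟨c.2, hc⟩
    · exact exists_forall_holds_of_compatible hQproper hQdense hcomp

end Comparison

section Eliminable

open Comparison

variable {F M : Type} [Ring F] [AddCommGroup M] [LinearOrder M] [Module F M]
  {Q : Submodule F M} {ι : Type} [Fintype ι] {s t : (ι → M) → M}

variable (F Q) in
def Eliminable (R : (ι → M) → M → Prop) : Prop :=
  ∃ P : Set (ι → M), QFDefinable F Q P ∧ ∃ cs : List (Comparison × ((ι → M) → M)),
    (∀ c ∈ cs, IsAffineForm F c.2) ∧ ∀ x y, R x y ↔ x ∈ P ∧ ∀ c ∈ cs, c.1.Holds Q y (c.2 x)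

theorem Eliminable.of_iff_mem {R : (ι → M) → M → Prop} {P : Set (ι → M)}
    (hP : QFDefinable F Q P) (h : ∀ x y, R x y ↔ x ∈ P) : Eliminable F Q R :=
  ⟨P, hP, [], by simp, by simpa using h⟩

theorem Eliminable.of_iff_holds {R : (ι → M) → M → Prop} (k : Comparison)
    (ht : IsAffineForm F t) (h : ∀ x y, R x y ↔ k.Holds Q y (t x)) : Eliminable F Q R :=
  ⟨Set.univ, .univ, [(k, t)], by simpa using ht, by simpa using h⟩

theorem Eliminable.and {R R' : (ι → M) → M → Prop} (hR : Eliminable F Q R)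
    (hR' : Eliminable F Q R') : Eliminable F Q fun x y => R x y ∧ R' x y := by
  obtain ⟨P, hP, cs, hcs, hR⟩ := hR
  obtain ⟨P', hP', cs', hcs', hR'⟩ := hR'
  refine ⟨P ∩ P', hP.inter hP', cs ++ cs',
    fun c hc => (List.mem_append.1 hc).elim (hcs c) (hcs' c), fun x y => ?_⟩
  simp only [hR, hR', List.mem_append, or_imp, forall_and, Set.mem_inter_iff]
  tauto

variable [IsOrderedAddMonoid M]

theorem qfDefinable_setOf_holds (k : Comparison) (hs : IsAffineForm F s)
    (ht : IsAffineForm F t) : QFDefinable F Q {x | k.Holds Q (s x) (t x)} := by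
  cases k
  · exact qfDefinable_setOf_lt hs ht
  · exact qfDefinable_setOf_le hs ht
  · exact qfDefinable_setOf_lt ht hs
  · exact qfDefinable_setOf_le ht hs
  · exact qfDefinable_setOf_mem (hs.sub ht)
  · exact (qfDefinable_setOf_mem (hs.sub ht)).compl

theorem qfDefinable_setOf_compatible (k k' : Comparison) (hs : IsAffineForm F s)
    (ht : IsAffineForm F t) : QFDefinable F Q {x | Compatible Q k k' (s x) (t x)} := by
  cases k <;> cases k' <;> simp only [Compatible]
  all_goals first
    | exact BoolComb.setOf_const True
    | exact qfDefinable_setOf_lt hs ht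
    | exact qfDefinable_setOf_mem (hs.sub ht)
    | exact (qfDefinable_setOf_mem (hs.sub ht)).compl

end Eliminable

section Projection

open Comparison

variable {F M : Type} [DivisionRing F] [Infinite F] [AddCommGroup M] [LinearOrder M]
  [IsOrderedAddMonoid M] [Module F M] {Q : Submodule F M} {ι : Type} [Fintype ι]

theorem qfDefinable_setOf_exists_forall_holds (hQproper : (Q : Set M) ≠ Set.univ)
    (hQdense : ∀ a b : M, a < b → ∃ q ∈ Q, a < q ∧ q < b)
    {cs : List (Comparison × ((ι → M) → M))} (hcs : ∀ c ∈ cs, IsAffineForm F c.2) :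
    QFDefinable F Q {x | ∃ y, ∀ c ∈ cs, c.1.Holds Q y (c.2 x)} := by
  have key : {x | ∃ y, ∀ c ∈ cs, c.1.Holds Q y (c.2 x)} =
      {x | (∃ c ∈ cs, (c.1 = le ∨ c.1 = ge) ∧ ∀ d ∈ cs, d.1.Holds Q (c.2 x) (d.2 x)) ∨
        ∀ c ∈ cs, ∀ d ∈ cs, Compatible Q c.1 d.1 (c.2 x) (d.2 x)} := by
    ext x
    simpa only [List.forall_mem_map, List.mem_map, exists_exists_and_eq_and,
      forall_exists_index, and_imp, forall_apply_eq_imp_iff₂, Set.mem_ofPred_eq] using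
      exists_forall_holds_iff hQproper hQdense (cs.map fun c => (c.1, c.2 x))
  rw [key, Set.ofPred_or]
  refine (BoolComb.setOf_exists_mem cs fun c hc => ?_).union
    (BoolComb.setOf_forall_mem cs fun c hc => BoolComb.setOf_forall_mem cs fun d hd =>
      qfDefinable_setOf_compatible _ _ (hcs c hc) (hcs d hd))
  rw [Set.ofPred_and]
  exact (BoolComb.setOf_const _).inter
    (BoolComb.setOf_forall_mem cs fun d hd => qfDefinable_setOf_holds _ (hcs c hc) (hcs d hd))

theorem Eliminable.qfDefinable_setOf_exists (hQproper : (Q : Set M) ≠ Set.univ)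
    (hQdense : ∀ a b : M, a < b → ∃ q ∈ Q, a < q ∧ q < b) {R : (ι → M) → M → Prop}
    (hR : Eliminable F Q R) : QFDefinable F Q {x | ∃ y, R x y} := by
  obtain ⟨P, hP, cs, hcs, hR⟩ := hR
  have : {x | ∃ y, R x y} = P ∩ {x | ∃ y, ∀ c ∈ cs, c.1.Holds Q y (c.2 x)} := by
    ext x
    simp [hR]
  rw [this]
  exact hP.inter (qfDefinable_setOf_exists_forall_holds hQproper hQdense hcs)

end Projection

theorem add_smul_eq_smul_sub_neg_inv_smul {F M : Type} [DivisionRing F] [AddCommGroup M]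
    [Module F M] {γ : F} (hγ : γ ≠ 0) (m y : M) :
    m + γ • y = γ • (y - -γ⁻¹ • m) := by
  rw [smul_sub, smul_smul, mul_neg, mul_inv_cancel₀ hγ, neg_smul, one_smul, sub_neg_eq_add,
    add_comm]

section AtomElimination

open Comparison

variable {F M : Type} [Field F] [AddCommGroup M] [LinearOrder M] [Module F M]
  {Q : Submodule F M} {ι : Type} [Fintype ι] {g : (ι → M) → M}

theorem eliminable_add_smul_mem (hg : IsAffineForm F g) (γ : F) :
    Eliminable F Q (fun x y => g x + γ • y ∈ Q) ∧
      Eliminable F Q (fun x y => g x + γ • y ∉ Q) := by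
  rcases eq_or_ne γ 0 with rfl | hγ
  · simp only [zero_smul, add_zero]
    exact ⟨.of_iff_mem (qfDefinable_setOf_mem hg) fun _ _ => .rfl,
      .of_iff_mem (qfDefinable_setOf_mem hg).compl fun _ _ => .rfl⟩
  have ht : IsAffineForm F (-γ⁻¹ • g) := hg.smul _
  simp only [add_smul_eq_smul_sub_neg_inv_smul hγ, Q.smul_mem_iff hγ]
  exact ⟨.of_iff_holds mem ht fun _ _ => .rfl, .of_iff_holds nmem ht fun _ _ => .rfl⟩

variable [LinearOrder F] [IsStrictOrderedRing F] [IsOrderedAddMonoid M] [PosSMulStrictMono F M]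

theorem eliminable_pos_add_smul (hg : IsAffineForm F g) (γ : F) :
    Eliminable F Q (fun x y => 0 < g x + γ • y) ∧
      Eliminable F Q (fun x y => ¬ 0 < g x + γ • y) := by
  rcases eq_or_ne γ 0 with rfl | hγ
  · simp only [zero_smul, add_zero]
    exact ⟨.of_iff_mem (qfDefinable_setOf_pos hg) fun _ _ => .rfl,
      .of_iff_mem (qfDefinable_setOf_pos hg).compl fun _ _ => .rfl⟩
  have ht : IsAffineForm F (-γ⁻¹ • g) := hg.smul _
  simp only [add_smul_eq_smul_sub_neg_inv_smul hγ]
  rcases hγ.lt_or_gt with hγ | hγ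
  · simp only [smul_pos_iff_of_neg_left hγ, sub_neg]
    exact ⟨.of_iff_holds lt ht fun _ _ => .rfl, .of_iff_holds ge ht fun _ _ => not_lt⟩
  · simp only [smul_pos_iff_of_pos_left hγ, sub_pos]
    exact ⟨.of_iff_holds gt ht fun _ _ => .rfl, .of_iff_holds le ht fun _ _ => not_lt⟩

theorem eliminable_mem_of_mem_affineAtoms {a : Set (Option ι → M)}
    (ha : a ∈ affineAtoms F Q) :
    Eliminable F Q (fun x y => Option.elim' y x ∈ a) ∧
      Eliminable F Q (fun x y => Option.elim' y x ∉ a) := by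
  obtain ⟨f, hf, rfl | rfl⟩ := ha <;> obtain ⟨g, γ, hg, hfg⟩ := hf.exists_option_elim' <;>
    simp only [Set.mem_ofPred_eq, hfg]
  · exact eliminable_pos_add_smul hg γ
  · exact eliminable_add_smul_mem hg γ

theorem qfDefinable_setOf_exists_and_mem (hQproper : (Q : Set M) ≠ Set.univ)
    (hQdense : ∀ a b : M, a < b → ∃ q ∈ Q, a < q ∧ q < b) {A : List (Set (Option ι → M))}
    (hA : ∀ a ∈ A, a ∈ affineAtoms F Q) {S : Set (Option ι → M)}
    (hS : BoolComb.IsDeterminedBy A S) {R : (ι → M) → M → Prop} (hR : Eliminable F Q R) :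
    QFDefinable F Q {x | ∃ y, R x y ∧ Option.elim' y x ∈ S} := by
  induction A generalizing S R with
  | nil =>
    rcases hS.eq_empty_or_eq_univ with rfl | rfl
    · simpa using BoolComb.empty
    · simpa using hR.qfDefinable_setOf_exists hQproper hQdense
  | cons a A ih =>
    obtain ⟨S₁, S₂, h₁, h₂, rfl⟩ := hS.cons
    have hA' := fun b hb => hA b (List.mem_cons_of_mem a hb)
    obtain ⟨hin, hout⟩ := eliminable_mem_of_mem_affineAtoms (hA a List.mem_cons_self)
    have : {x | ∃ y, R x y ∧ Option.elim' y x ∈ a ∩ S₁ ∪ aᶜ ∩ S₂} =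
        {x | ∃ y, (R x y ∧ Option.elim' y x ∈ a) ∧ Option.elim' y x ∈ S₁} ∪
          {x | ∃ y, (R x y ∧ Option.elim' y x ∉ a) ∧ Option.elim' y x ∈ S₂} := by
      ext x
      simp only [Set.mem_ofPred_eq, Set.mem_union, Set.mem_inter_iff, Set.mem_compl_iff,
        ← exists_or, and_or_left, and_assoc]
    rw [this]
    exact (ih hA' h₁ (hR.and hin)).union (ih hA' h₂ (hR.and hout))

theorem QFDefinable.setOf_exists (hQproper : (Q : Set M) ≠ Set.univ)
    (hQdense : ∀ a b : M, a < b → ∃ q ∈ Q, a < q ∧ q < b) {S : Set (Option ι → M)}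
    (hS : QFDefinable F Q S) : QFDefinable F Q {x | ∃ y, Option.elim' y x ∈ S} := by
  obtain ⟨A, hA, hAS⟩ := hS.exists_isDeterminedBy
  simpa using qfDefinable_setOf_exists_and_mem hQproper hQdense hA hAS
    (Eliminable.of_iff_mem (R := fun _ _ => True) .univ (by simp))

end AtomElimination

section Formulas

open FirstOrder Language

variable {F M : Type} [Field F] [AddCommGroup M] [LinearOrder M] [Module F M]

theorem isAffineForm_realize {ι : Type} [Fintype ι] (one : M) (Q : Set M) {A : Set M}
    {β : Type*} (t : ((LP F)[[A]]).Term β) (u : β → ι) :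
    letI := LPStruc F M one Q
    IsAffineForm F fun x : ι → M => t.realize (x ∘ u) := by
  let := LPStruc F M one Q
  classical
  induction t with
  | var i => exact isAffineForm_apply (u i)
  | @func l f ts ih =>
    rcases f with f | c
    · cases f with
      | add => exact (ih 0).add (ih 1)
      | neg => exact (ih 0).neg
      | zero => exact isAffineForm_const 0
      | one => exact isAffineForm_const one
      | smul a => exact (ih 0).smul a
    · match l, c with
      | 0, c => exact isAffineForm_const (c : M)

variable [LinearOrder F] [IsStrictOrderedRing F] [IsOrderedAddMonoid M] [PosSMulStrictMono F M]

theorem qfDefinable_setOf_realize (one : M) {Q : Submodule F M}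
    (hQproper : (Q : Set M) ≠ Set.univ) (hQdense : ∀ a b : M, a < b → ∃ q ∈ Q, a < q ∧ q < b)
    {A : Set M} {α : Type*} {k : ℕ} (φ : ((LP F)[[A]]).BoundedFormula α k)
    {ι : Type} [Fintype ι] (v : α → ι) (w : Fin k → ι) :
    letI := LPStruc F M one Q
    QFDefinable F Q {x : ι → M | φ.Realize (x ∘ v) (x ∘ w)} := by
  let := LPStruc F M one Q
  have hterm {l} (t : ((LP F)[[A]]).Term (α ⊕ Fin l)) {ι : Type} [Fintype ι] (v : α → ι)
      (w : Fin l → ι) : IsAffineForm F fun x : ι → M => t.realize (Sum.elim (x ∘ v) (x ∘ w)) := by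
    simpa only [← Sum.comp_elim] using isAffineForm_realize one Q t (Sum.elim v w)
  induction φ generalizing ι with
  | falsum => exact BoolComb.empty
  | equal t₁ t₂ => exact qfDefinable_setOf_eq (hterm t₁ v w) (hterm t₂ v w)
  | rel R ts =>
    rcases R with R | R
    · cases R with
      | lt => exact qfDefinable_setOf_lt (hterm (ts 0) v w) (hterm (ts 1) v w)
      | q => exact qfDefinable_setOf_mem (hterm (ts 0) v w)
    · exact isEmptyElim R
  | imp φ ψ ih₁ ih₂ =>
    simp only [BoundedFormula.realize_imp, imp_iff_not_or, Set.ofPred_or, ← Set.compl_ofPred]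
    exact (ih₁ v w).compl.union (ih₂ v w)
  | all φ ih =>
    have key : {x : ι → M | φ.all.Realize (x ∘ v) (x ∘ w)} =
        {x | ∃ y, Option.elim' y x ∈
          {z | ¬ φ.Realize (z ∘ (some ∘ v)) (z ∘ Fin.snoc (some ∘ w) none)}}ᶜ := by
      ext x
      simp only [BoundedFormula.realize_all, Fin.comp_snoc, Set.mem_compl_iff,
        Set.mem_ofPred_eq, not_exists, not_not]
      rfl
    rw [key]
    exact (QFDefinable.setOf_exists hQproper hQdense
      (ih (some ∘ v) (Fin.snoc (some ∘ w) none)).compl).compl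

end Formulas

section Cubes

variable {F M : Type} [Field F] [AddCommGroup M] [LinearOrder M] [IsOrderedAddMonoid M]
  [Module F M] {ι : Type}

def cube (z : ι → M) (δ : M) : Set (ι → M) := {w | ∀ i, |w i - z i| < δ}

theorem pos_iff_pos_of_abs_sub_lt_abs {a b : M} (h : |a - b| < |b|) : 0 < a ↔ 0 < b := by
  rcases lt_trichotomy b 0 with hb | rfl | hb
  · rw [abs_of_neg hb] at h
    have ha := (abs_sub_lt_iff.1 h).1
    rw [sub_lt_iff_lt_add, neg_add_cancel] at ha
    exact iff_of_false ha.not_gt hb.not_gt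
  · simp only [sub_zero, abs_zero] at h
    exact absurd h (abs_nonneg a).not_gt
  · rw [abs_of_pos hb] at h
    exact iff_of_true (by simpa using (abs_sub_lt_iff.1 h).2) hb

theorem exists_add_mem_cube {Q : Submodule F M}
    (hQdense : ∀ a b : M, a < b → ∃ q ∈ Q, a < q ∧ q < b) (x z : ι → M) {δ : M}
    (hδ : 0 < δ) : ∃ q : ι → M, (∀ i, q i ∈ Q) ∧ x + q ∈ cube z δ := by
  choose q hq h₁ h₂ using fun i => hQdense (z i - x i - δ) (z i - x i + δ)
    ((sub_lt_self _ hδ).trans (lt_add_of_pos_right _ hδ))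
  refine ⟨q, hq, fun i => ?_⟩
  rw [Pi.add_apply, show x i + q i - z i = q i - (z i - x i) by abel]
  exact abs_sub_lt_iff.2 ⟨sub_lt_iff_lt_add'.2 (h₂ i), sub_lt_comm.1 (h₁ i)⟩

variable [Fintype ι] {f : (ι → M) → M}

theorem IsAffineForm.forall_eq_or_exists_ne_zero (hf : IsAffineForm F f) :
    (∀ x y, f x = f y) ∨
      ∀ (z : ι → M) (h : M), 0 < h → ∃ z', (∀ i, |z' i - z i| ≤ h) ∧ f z' ≠ 0 := by
  classical
  obtain ⟨c, b, hf⟩ := hf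
  by_cases hc : c = 0
  · exact Or.inl fun x y => by simp [hf, hc]
  refine Or.inr fun z h hh => ?_
  obtain ⟨i₀, hi₀⟩ := Function.ne_iff.1 hc
  by_cases hz : f z = 0
  · refine ⟨Function.update z i₀ (z i₀ + h), fun i => ?_, ?_⟩
    · rcases eq_or_ne i i₀ with rfl | hi
      · simp [abs_of_pos hh]
      · simp [Function.update_of_ne hi, hh.le]
    · have : f (Function.update z i₀ (z i₀ + h)) - f z = c i₀ • h := by
        simp only [hf, add_sub_add_right_eq_sub, ← Finset.sum_sub_distrib, ← smul_sub]
        rw [Finset.sum_eq_single i₀ (fun i _ hi => by simp [Function.update_of_ne hi])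
          (by simp)]
        simp
      rw [hz, sub_zero] at this
      rw [this]
      exact smul_ne_zero hi₀ hh.ne'
  · exact ⟨z, fun i => by simp [hh.le], hz⟩

variable [LinearOrder F] [IsStrictOrderedRing F] [PosSMulStrictMono F M]

theorem IsAffineForm.exists_abs_sub_le (hf : IsAffineForm F f) :
    ∃ K : F, 0 ≤ K ∧ ∀ w z : ι → M, ∀ δ, (∀ i, |w i - z i| ≤ δ) → |f w - f z| ≤ K • δ := by
  obtain ⟨c, b, hf⟩ := hf
  refine ⟨∑ i, |c i|, Finset.sum_nonneg fun i _ => abs_nonneg _, fun w z δ hδ => ?_⟩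
  have : f w - f z = ∑ i, c i • (w i - z i) := by
    simp only [hf, smul_sub, Finset.sum_sub_distrib]; abel
  rw [this, Finset.sum_smul]
  refine (Finset.abs_sum_le_sum_abs _ _).trans (Finset.sum_le_sum fun i _ => ?_)
  rw [abs_smul]
  exact smul_le_smul_of_nonneg_left (hδ i) (abs_nonneg _)

theorem IsAffineForm.exists_cube_subset (hf : IsAffineForm F f) (z : ι → M) {δ : M}
    (hδ : 0 < δ) : ∃ z' δ', 0 < δ' ∧ cube z' δ' ⊆ cube z δ ∧
      ∀ w ∈ cube z' δ', (0 < f w ↔ 0 < f z') := by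
  rcases hf.forall_eq_or_exists_ne_zero with hconst | hne
  · exact ⟨z, δ, hδ, subset_rfl, fun w _ => by rw [hconst w z]⟩
  set h : M := (2 : F)⁻¹ • δ
  have hh : 0 < h := smul_pos (by norm_num) hδ
  have hhδ : h + h = δ := by rw [← add_smul]; norm_num
  obtain ⟨z', hz'z, hz'⟩ := hne z h hh
  obtain ⟨K, hK, hKf⟩ := hf.exists_abs_sub_le
  have hfz' : 0 < |f z'| := abs_pos.2 hz'
  set δ' := min h ((K + 1)⁻¹ • |f z'|)
  have hδ' : 0 < δ' := lt_min hh (smul_pos (by positivity) hfz')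
  refine ⟨z', δ', hδ', fun w hw i => ?_, fun w hw => pos_iff_pos_of_abs_sub_lt_abs ?_⟩
  · calc |w i - z i| ≤ |w i - z' i| + |z' i - z i| := abs_sub_le _ _ _
      _ < δ' + h := add_lt_add_of_lt_of_le (hw i) (hz'z i)
      _ ≤ h + h := add_le_add_left (min_le_left _ _) _
      _ = δ := hhδ
  · have hK1 : K * (K + 1)⁻¹ < 1 := by
      rw [← div_eq_mul_inv, div_lt_one (by linarith)]; linarith
    calc |f w - f z'| ≤ K • δ' := hKf w z' δ' fun i => (hw i).le
      _ ≤ K • ((K + 1)⁻¹ • |f z'|) := smul_le_smul_of_nonneg_left (min_le_right _ _) hK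
      _ = (K * (K + 1)⁻¹) • |f z'| := smul_smul _ _ _
      _ < |f z'| := (smul_lt_iff_lt_one_left hfz').2 hK1

theorem exists_cube_forall_pos_iff [Nontrivial M] {κ : Type*} (l : List κ)
    {f : κ → (ι → M) → M} (hf : ∀ k ∈ l, IsAffineForm F (f k)) :
    ∃ z δ, 0 < δ ∧ ∀ k ∈ l, ∀ w ∈ cube z δ, ∀ w' ∈ cube z δ, (0 < f k w ↔ 0 < f k w') := by
  induction l with
  | nil =>
    obtain ⟨δ, hδ⟩ := exists_zero_lt (α := M)
    exact ⟨0, δ, hδ, by simp⟩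
  | cons k l ih =>
    obtain ⟨z, δ, hδ, h⟩ := ih fun k hk => hf k (List.mem_cons_of_mem _ hk)
    obtain ⟨z', δ', hδ', hsub, hk⟩ := (hf k List.mem_cons_self).exists_cube_subset z hδ
    refine ⟨z', δ', hδ', ?_⟩
    simp only [List.mem_cons, forall_eq_or_imp]
    exact ⟨fun w hw w' hw' => (hk w hw).trans (hk w' hw').symm,
      fun k hk w hw w' hw' => h k hk w (hsub hw) w' (hsub hw')⟩

end Cubes

theorem posSMulStrictMono_of_smul_pos {F M : Type} [Ring F] [PartialOrder F] [AddCommGroup M]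
    [PartialOrder M] [IsOrderedAddMonoid M] [Module F M]
    (h : ∀ (c : F) (x : M), 0 < c → 0 < x → 0 < c • x) : PosSMulStrictMono F M :=
  ⟨fun c hc a b hab => by simpa [smul_sub] using h c (b - a) hc (sub_pos.2 hab)⟩

section Invariant

variable {F M : Type} [Field F] [LinearOrder F] [IsStrictOrderedRing F] [AddCommGroup M]
  [LinearOrder M] [IsOrderedAddMonoid M] [Module F M] [PosSMulStrictMono F M]
  {Q : Submodule F M}

theorem POVSDefinable.qfDefinable {one : M} (hQproper : (Q : Set M) ≠ Set.univ)
    (hQdense : ∀ a b : M, a < b → ∃ q ∈ Q, a < q ∧ q < b) {n : ℕ} {S : Set (Fin n → M)}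
    (hS : POVSDefinable F M one (Q : Set M) S) : QFDefinable F Q S := by
  obtain ⟨φ, rfl⟩ := hS
  convert qfDefinable_setOf_realize one hQproper hQdense φ id finZeroElim using 3 with x
  rw [Function.comp_id, Subsingleton.elim (x ∘ finZeroElim) default]
  rfl

theorem QFDefinable.boolComb_of_forall_add_mem [Nontrivial M] {ι : Type} [Fintype ι]
    (hQdense : ∀ a b : M, a < b → ∃ q ∈ Q, a < q ∧ q < b) {S : Set (ι → M)}
    (hS : QFDefinable F Q S) (hinv : ∀ x ∈ S, ∀ q : ι → M, (∀ i, q i ∈ Q) → x + q ∈ S) :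
    BoolComb {T | ∃ (c : ι → F) (b : M), T = {x | ∑ i, c i • x i + b ∈ Q}} S := by
  obtain ⟨A, hA, hAS⟩ := hS.exists_isDeterminedBy
  choose! f hf ha using hA
  obtain ⟨z, δ, hδ, hcube⟩ := exists_cube_forall_pos_iff A hf
  refine BoolComb.of_isDeterminedBy (A := A.map fun a => {x | f a x ∈ Q}) ?_ ?_
  · simp only [List.mem_map, forall_exists_index, and_imp, forall_apply_eq_imp_iff₂]
    intro a haA
    obtain ⟨c, b, hcb⟩ := hf a haA
    exact .basic ⟨c, b, by simp only [hcb]⟩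
  intro x x' hxx' hx
  obtain ⟨q, hq, hxq⟩ := exists_add_mem_cube hQdense x z hδ
  obtain ⟨q', hq', hxq'⟩ := exists_add_mem_cube hQdense x' z hδ
  have hw' : x' + q' ∈ S := by
    refine hAS (x + q) (x' + q') (fun a haA => ?_) (hinv x hx q hq)
    rcases ha a haA with h | h <;> rw [h]
    · exact hcube a haA _ hxq _ hxq'
    · simp only [Set.mem_ofPred_eq, (hf a haA).add_mem_iff _ hq, (hf a haA).add_mem_iff _ hq']
      exact hxx' _ (List.mem_map_of_mem haA)
  simpa using hinv _ hw' (-q') fun i => Q.neg_mem (hq' i)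

end Invariant

theorem statement5
    (hsmul : ∀ (c : F) (x : M), 0 < c → 0 < x → 0 < c • x)
    (one : M)
    (Q : Submodule F M) (hQproper : (Q : Set M) ≠ Set.univ)
    (hQdense : ∀ a b : M, a < b → ∃ q ∈ Q, a < q ∧ q < b)
    (n : ℕ) (S : Set (Fin n → M)) (hS : POVSDefinable F M one (Q : Set M) S)
    (hinv : ∀ x ∈ S, ∀ q : Fin n → M, (∀ i, q i ∈ Q) → (fun i => x i + q i) ∈ S) :
    BoolComb {T : Set (Fin n → M) | ∃ (c : Fin n → F) (b : M),
        T = {x | (∑ i, c i • x i) + b ∈ Q}} S := by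
  have := posSMulStrictMono_of_smul_pos hsmul
  have := Q.nontrivial_of_coe_ne_univ hQproper
  exact QFDefinable.boolComb_of_forall_add_mem hQdense (hS.qfDefinable hQproper hQdense) hinv
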